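/- arXiv:2504.07804 — 8 statements merged into one kernel-verified Lean document; each statement's English description precedes it below -/
import Mathlib

section
/- Let f : F_2^k → S be a function and let ≺ be a total order on Im(f) such that for every u ∈ F_2^k the function ball B_f(u,ρ) = {f(u') : d(u,u') ≤ ρ} forms a contiguous block of at most λ consecutive elements with respect to ≺. Then there exists a map Col_f : F_2^k → {1,...,λ} such that for all u,v with Hamming distance d(u,v) ≤ ρ and f(u) ≠ f(v), we have Col_f(u) ≠ Col_f(v). -/
/-- Function ball of radius ρ around u for f on binary vectors. -/
def funcBall {k : ℕ} {S : Type*} (f : (Fin k → ZMod 2) → S) (u : Fin k → ZMod 2) (ρ : ℕ) : Set S :=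
  {s | ∃ v, hammingDist u v ≤ ρ ∧ f v = s}

/-- If each function ball is a contiguous block of at most λ consecutive elements
with respect to a total order on the image of f, then there is a coloring with λ colors
separating close vectors with distinct function values. -/
theorem stmt_0 {k ρ lam : ℕ} {S : Type*} [LinearOrder S]
    (f : (Fin k → ZMod 2) → S)
    (hcard : ∀ u, (funcBall f u ρ).ncard ≤ lam)
    (hcontig : ∀ u, ∀ a ∈ funcBall f u ρ, ∀ b ∈ funcBall f u ρ,
      ∀ c ∈ Set.range f, a ≤ c → c ≤ b → c ∈ funcBall f u ρ) :
    ∃ Col : (Fin k → ZMod 2) → Fin lam,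
      ∀ u v, hammingDist u v ≤ ρ → f u ≠ f v → Col u ≠ Col v := by
  classical
  have hfin : (Set.range f).Finite := Set.finite_range f
  have hball_sub : ∀ u, funcBall f u ρ ⊆ Set.range f := by
    rintro u s ⟨v, _, rfl⟩; exact ⟨v, rfl⟩
  have hball_fin : ∀ u, (funcBall f u ρ).Finite := fun u => hfin.subset (hball_sub u)
  have hmem : ∀ u, f u ∈ funcBall f u ρ := fun u => ⟨u, by simp, rfl⟩
  have hlam : 0 < lam := by
    set u : Fin k → ZMod 2 := fun _ => 0
    have h1 : 0 < (funcBall f u ρ).ncard :=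
      (Set.ncard_pos (hball_fin u)).mpr ⟨f u, hmem u⟩
    exact lt_of_lt_of_le h1 (hcard u)
  set N : (Fin k → ZMod 2) → ℕ := fun u => {s ∈ Set.range f | s < f u}.ncard with hN
  have key : ∀ u v, hammingDist u v ≤ ρ → f u < f v → N u % lam ≠ N v % lam := by
    intro u v hd hlt
    have hfv : f v ∈ funcBall f u ρ := ⟨v, hd, rfl⟩
    set H : Set S := {s ∈ Set.range f | f u ≤ s ∧ s < f v} with hH
    have hHfin : H.Finite := hfin.subset (fun s hs => hs.1)
    have hNfin : ∀ w, {s ∈ Set.range f | s < f w}.Finite :=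
      fun w => hfin.subset (fun s hs => hs.1)
    -- split
    have hsplit : {s ∈ Set.range f | s < f v} = {s ∈ Set.range f | s < f u} ∪ H := by
      ext s
      simp only [Set.mem_setOf_eq, Set.mem_union, hH]
      constructor
      · rintro ⟨hr, hs⟩
        rcases lt_or_ge s (f u) with h | h
        · exact Or.inl ⟨hr, h⟩
        · exact Or.inr ⟨hr, h, hs⟩
      · rintro (⟨hr, h⟩ | ⟨hr, h1, h2⟩)
        · exact ⟨hr, h.trans hlt⟩
        · exact ⟨hr, h2⟩
    have hdisj : Disjoint {s ∈ Set.range f | s < f u} H := by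
      rw [Set.disjoint_left]
      rintro s ⟨_, hs⟩ ⟨_, hs', _⟩
      exact absurd hs (not_lt.mpr hs')
    have hNv : N v = N u + H.ncard := by
      rw [hN]
      simp only
      rw [hsplit, Set.ncard_union_eq hdisj (hNfin u) hHfin]
    -- interval inside ball
    have hI : H ∪ {f v} ⊆ funcBall f u ρ := by
      rintro s (⟨hr, h1, h2⟩ | hs)
      · exact hcontig u (f u) (hmem u) (f v) hfv s hr h1 h2.le
      · rw [Set.mem_singleton_iff] at hs; subst hs; exact hfv
    have hIcard : H.ncard + 1 ≤ lam := by
      have hdisj2 : Disjoint H {f v} := by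
        rw [Set.disjoint_left]
        rintro s ⟨_, _, h2⟩ hs
        rw [Set.mem_singleton_iff] at hs
        exact absurd h2 (by simp [hs])
      have := Set.ncard_le_ncard hI (hball_fin u)
      rw [Set.ncard_union_eq hdisj2 hHfin (Set.finite_singleton _)] at this
      simpa using this.trans (hcard u)
    have hHpos : 0 < H.ncard :=
      (Set.ncard_pos hHfin).mpr ⟨f u, ⟨u, rfl⟩, le_refl _, hlt⟩
    intro heq
    have hle : N u ≤ N v := by omega
    have hdvd : lam ∣ N v - N u := (Nat.modEq_iff_dvd' hle).mp heq
    have : lam ≤ H.ncard := by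
      have : N v - N u = H.ncard := by omega
      exact Nat.le_of_dvd hHpos (this ▸ hdvd)
    omega
  refine ⟨fun u => ⟨N u % lam, Nat.mod_lt _ hlam⟩, ?_⟩
  intro u v hd hne hcol
  have hcol' : N u % lam = N v % lam := by
    simpa [Fin.ext_iff] using hcol
  rcases lt_or_gt_of_ne hne with h | h
  · exact key u v hd h hcol'
  · exact key v u (by rwa [hammingDist_comm]) h hcol'.symm
end

section
/- If a coloring Col_f : F_2^k → {1,...,λ} satisfies Col_f(u) ≠ Col_f(v) whenever d(u,v) ≤ 2t and f(u) ≠ f(v), and if C_1,...,C_λ ∈ F_2^r are codewords with pairwise Hamming distance at least 2t, then the encoding Enc(u) = (u, C_{Col_f(u)}) is an (f,t)-function-correcting code: for all u,v with f(u) ≠ f(v), d(Enc(u), Enc(v)) ≥ 2t+1. -/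
lemma hammingDist_append {k r : ℕ} {α : Type*} [DecidableEq α]
    (u v : Fin k → α) (a b : Fin r → α) :
    hammingDist (Fin.append u a) (Fin.append v b) = hammingDist u v + hammingDist a b := by
  classical
  simp only [hammingDist, Finset.card_filter]
  rw [Fin.sum_univ_add]
  simp [Fin.append_left, Fin.append_right]

/-- If a coloring separates close vectors with distinct function values and the
codewords C₁,…,C_λ have pairwise distance at least 2t, then appending C_{Col(u)} to u
yields an (f,t)-function-correcting code. -/
theorem stmt_1 {k r t lam : ℕ} {S : Type*}
    (f : (Fin k → ZMod 2) → S)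
    (Col : (Fin k → ZMod 2) → Fin lam)
    (hCol : ∀ u v, hammingDist u v ≤ 2 * t → f u ≠ f v → Col u ≠ Col v)
    (C : Fin lam → (Fin r → ZMod 2))
    (hC : ∀ i j, i ≠ j → 2 * t ≤ hammingDist (C i) (C j)) :
    ∀ u v, f u ≠ f v →
      2 * t + 1 ≤ hammingDist (Fin.append u (C (Col u))) (Fin.append v (C (Col v))) := by
  intro u v hf
  rw [hammingDist_append]
  by_cases h : hammingDist u v ≤ 2 * t
  · have h1 : Col u ≠ Col v := hCol u v h hf
    have h2 := hC _ _ h1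
    have h3 : 1 ≤ hammingDist u v := by
      rw [Nat.one_le_iff_ne_zero, Ne, hammingDist_eq_zero]
      rintro rfl; exact hf rfl
    omega
  · omega
end

section
/- Let f : F_2^k → S be a locally (2t,4)-bounded function whose function balls B_f(u,2t) are contiguous blocks under a fixed total order on Im(f). Then there exists an (f,t)-FCC with redundancy r = 3t; i.e., the optimal redundancy satisfies r_f(k,t) ≤ 3t. -/
lemma hd_comp_equiv {ι κ α : Type*} [Fintype ι] [Fintype κ] [DecidableEq α]
    (e : κ ≃ ι) (x y : ι → α) : hammingDist (x ∘ e) (y ∘ e) = hammingDist x y := by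
  simp only [hammingDist]
  apply Finset.card_equiv e
  intro i
  simp

lemma hd_prod {α : Type*} [DecidableEq α] (t : ℕ) (a b : Fin 3 → α) :
    hammingDist (fun p : Fin 3 × Fin t => a p.1) (fun p : Fin 3 × Fin t => b p.1)
      = hammingDist a b * t := by
  simp only [hammingDist]
  have : (Finset.univ.filter fun p : Fin 3 × Fin t => a p.1 ≠ b p.1)
      = (Finset.univ.filter fun i => a i ≠ b i) ×ˢ Finset.univ := by
    ext p
    simp [Finset.mem_product]
  rw [this, Finset.card_product, Finset.card_univ, Fintype.card_fin]

lemma hd_append {m n : ℕ} {α : Type*} [DecidableEq α] (a c : Fin m → α) (b d : Fin n → α) :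
    hammingDist (Fin.append a b) (Fin.append c d) = hammingDist a c + hammingDist b d := by
  simp only [hammingDist, Finset.card_filter]
  rw [Fin.sum_univ_add]
  simp [Fin.append_left, Fin.append_right]

def Wpar : Fin 4 → Fin 3 → ZMod 2 := ![![0,0,0],![1,1,0],![1,0,1],![0,1,1]]

lemma Wpar_dist : ∀ i j : Fin 4, i ≠ j → hammingDist (Wpar i) (Wpar j) = 2 := by decide

/-- For a locally (2t,4)-bounded function with contiguous function balls, there exists
an (f,t)-FCC with redundancy 3t, i.e. r_f(k,t) ≤ 3t. -/
theorem stmt_2 {k t : ℕ} (ht : 0 < t) {S : Type*} [LinearOrder S]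
    (f : (Fin k → ZMod 2) → S)
    (hcard : ∀ u, (funcBall f u (2 * t)).ncard ≤ 4)
    (hcontig : ∀ u, ∀ a ∈ funcBall f u (2 * t), ∀ b ∈ funcBall f u (2 * t),
      ∀ c ∈ Set.range f, a ≤ c → c ≤ b → c ∈ funcBall f u (2 * t)) :
    ∃ Enc : (Fin k → ZMod 2) → (Fin (k + 3 * t) → ZMod 2),
      (∀ u i, Enc u (Fin.castAdd (3 * t) i) = u i) ∧
      (∀ u v, f u ≠ f v → 2 * t + 1 ≤ hammingDist (Enc u) (Enc v)) := by
  classical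
  set R : Finset S := Finset.image f Finset.univ with hR
  set rank : S → ℕ := fun s => (R.filter (· < s)).card with hrank
  -- key lemma: close inputs with distinct f-values get ranks differing by 1..3
  have key : ∀ u v, f u < f v → hammingDist u v ≤ 2 * t →
      rank (f u) % 4 ≠ rank (f v) % 4 := by
    intro u v hlt hd
    have hball_fin : (funcBall f u (2 * t)).Finite := by
      apply (Set.finite_range f).subset
      rintro s ⟨w, _, rfl⟩; exact ⟨w, rfl⟩
    have hfu : f u ∈ funcBall f u (2 * t) := ⟨u, by simp, rfl⟩
    have hfv : f v ∈ funcBall f u (2 * t) := ⟨v, hd, rfl⟩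
    set T : Finset S := R.filter (fun c => f u ≤ c ∧ c < f v) with hT
    have hTsub : (↑T : Set S) ⊆ funcBall f u (2 * t) := by
      intro c hc
      simp only [hT, Finset.coe_filter, Set.mem_setOf_eq, Finset.mem_image, hR] at hc
      obtain ⟨hcR, hc1, hc2⟩ := hc
      have hcr : c ∈ Set.range f := by
        obtain ⟨w, -, rfl⟩ := hcR; exact ⟨w, rfl⟩
      exact hcontig u (f u) hfu (f v) hfv c hcr hc1 (le_of_lt hc2)
    have hfvT : f v ∉ (↑T : Set S) := by
      simp only [hT, Finset.coe_filter, Set.mem_setOf_eq]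
      rintro ⟨-, -, h⟩; exact lt_irrefl _ h
    have hTcard : T.card ≤ 3 := by
      have h1 : insert (f v) (↑T : Set S) ⊆ funcBall f u (2 * t) := by
        intro c hc
        rcases hc with rfl | hc
        · exact hfv
        · exact hTsub hc
      have h2 := Set.ncard_le_ncard h1 hball_fin
      rw [Set.ncard_insert_of_notMem hfvT T.finite_toSet, Set.ncard_coe_finset] at h2
      have := hcard u
      omega
    have hT1 : 1 ≤ T.card := by
      apply Finset.card_pos.2
      refine ⟨f u, ?_⟩
      simp only [hT, Finset.mem_filter]
      exact ⟨Finset.mem_image_of_mem f (Finset.mem_univ u), le_refl _, hlt⟩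
    have hsplit : rank (f v) = rank (f u) + T.card := by
      have hdis : Disjoint (R.filter (· < f u)) T := by
        rw [Finset.disjoint_filter]
        intro c _ hc ⟨hc1, _⟩
        exact absurd hc1 (not_le.2 hc)
      have hun : R.filter (· < f v) = R.filter (· < f u) ∪ T := by
        ext c
        simp only [Finset.mem_filter, Finset.mem_union, hT]
        constructor
        · rintro ⟨hcR, hc⟩
          rcases lt_or_ge c (f u) with h | h
          · exact Or.inl ⟨hcR, h⟩
          · exact Or.inr ⟨hcR, h, hc⟩
        · rintro (⟨hcR, h⟩ | ⟨hcR, h1, h2⟩)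
          · exact ⟨hcR, h.trans hlt⟩
          · exact ⟨hcR, h2⟩
      simp only [hrank]
      rw [hun, Finset.card_union_of_disjoint hdis]
    omega
  -- coloring and encoding
  set col : (Fin k → ZMod 2) → Fin 4 := fun u => ⟨rank (f u) % 4, Nat.mod_lt _ (by norm_num)⟩ with hcol
  set par : (Fin k → ZMod 2) → Fin (3 * t) → ZMod 2 :=
    fun u => (fun p : Fin 3 × Fin t => Wpar (col u) p.1) ∘ finProdFinEquiv.symm with hpar
  refine ⟨fun u => Fin.append u (par u), ?_, ?_⟩
  · intro u i; exact Fin.append_left u (par u) i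
  · intro u v hne
    have huv : u ≠ v := fun h => hne (by rw [h])
    rw [hd_append]
    have hpd : hammingDist (par u) (par v) = hammingDist (Wpar (col u)) (Wpar (col v)) * t := by
      simp only [hpar]
      rw [hd_comp_equiv finProdFinEquiv.symm, hd_prod]
    by_cases hcc : col u = col v
    · -- colors equal: inputs must be far apart
      have hfar : 2 * t + 1 ≤ hammingDist u v := by
        by_contra h
        push_neg at h
        have hd : hammingDist u v ≤ 2 * t := by omega
        have hcc' : rank (f u) % 4 = rank (f v) % 4 := by
          have := congrArg Fin.val hcc
          simpa [hcol] using this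
        rcases lt_trichotomy (f u) (f v) with h1 | h1 | h1
        · exact key u v h1 hd hcc'
        · exact hne h1
        · exact key v u h1 (by rwa [hammingDist_comm]) hcc'.symm
      omega
    · have h2 : hammingDist (Wpar (col u)) (Wpar (col v)) = 2 := Wpar_dist _ _ hcc
      have h1 : 1 ≤ hammingDist u v := hammingDist_pos.2 huv
      rw [hpd, h2]
      omega
end

section
/- (Generalized Plotkin bound) Let D be an M × M symmetric matrix of nonnegative integers and suppose there exist p_1,...,p_M ∈ F_2^r with d(p_i,p_j) ≥ D_{i,j} for all i ≠ j. Then r ≥ (4/M²)·Σ_{i<j} D_{i,j} if M is even, and r ≥ (4/(M²−1))·Σ_{i<j} D_{i,j} if M is odd. -/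
/-!
Double counting: the sum of all ordered pairwise distances of `p_1, …, p_M` is the sum over the
coordinates `k` of `2 n_k (M - n_k)`, where `n_k` of the words vanish at `k`. Each term is at most
`M² / 2`, and at most `(M² - 1) / 2` when `M` is odd, while every unordered pair `i < j`
contributes at least `D i j` to the left-hand side.
-/

open Finset

lemma four_mul_mul_le_ite (a b : ℕ) :
    4 * a * b ≤ if Even (a + b) then (a + b) ^ 2 else (a + b) ^ 2 - 1 := by
  split_ifs with h
  · exact four_mul_le_sq_add a b
  · have hab : a ≠ b := by rintro rfl; exact h ⟨a, rfl⟩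
    have : 1 ≤ (a + b) ^ 2 := Nat.one_le_pow _ _ (by omega)
    zify [this]
    nlinarith [sq_pos_of_ne_zero (sub_ne_zero.mpr (Int.ofNat_inj.not.mpr hab))]

section

variable {ι : Type*} [Fintype ι]

lemma card_filter_ne_eq (x : ι → ZMod 2) :
    #{ij : ι × ι | x ij.1 ≠ x ij.2} = 2 * #{i | x i = 0} * #{i | x i ≠ 0} := by
  classical
  have hsplit : ∀ a b : ZMod 2, a ≠ b ↔ (a = 0 ∧ b ≠ 0) ∨ (a ≠ 0 ∧ b = 0) := by
    decide
  rw [filter_congr fun ij _ => hsplit (x ij.1) (x ij.2), filter_or, card_union_of_disjoint]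
  · rw [← univ_product_univ, filter_product (fun i => x i = 0) (fun j => x j ≠ 0),
      filter_product (fun i => x i ≠ 0) (fun j => x j = 0), card_product, card_product]
    ring
  · rw [disjoint_filter]; tauto

lemma two_mul_card_filter_ne_le (x : ι → ZMod 2) :
    2 * #{ij : ι × ι | x ij.1 ≠ x ij.2} ≤
      if Even (Fintype.card ι) then Fintype.card ι ^ 2 else Fintype.card ι ^ 2 - 1 := by
  have hcard : Fintype.card ι = #{i | x i = 0} + #{i | x i ≠ 0} :=
    (card_filter_add_card_filter_not _).symm
  rw [card_filter_ne_eq, hcard]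
  calc 2 * (2 * #{i | x i = 0} * #{i | x i ≠ 0})
      = 4 * #{i | x i = 0} * #{i | x i ≠ 0} := by ring
    _ ≤ _ := four_mul_mul_le_ite _ _

lemma sum_sum_hammingDist_eq {κ β : Type*} [Fintype κ] [DecidableEq β] (p : ι → κ → β) :
    ∑ i, ∑ j, hammingDist (p i) (p j) = ∑ k, #{ij : ι × ι | p ij.1 k ≠ p ij.2 k} := by
  simp only [hammingDist, card_filter]
  rw [← Fintype.sum_prod_type', sum_comm]

lemma two_mul_sum_sum_hammingDist_le {κ : Type*} [Fintype κ] (p : ι → κ → ZMod 2) :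
    2 * ∑ i, ∑ j, hammingDist (p i) (p j) ≤ Fintype.card κ *
      if Even (Fintype.card ι) then Fintype.card ι ^ 2 else Fintype.card ι ^ 2 - 1 := by
  rw [sum_sum_hammingDist_eq, mul_sum, ← smul_eq_mul, ← card_univ, ← sum_const]
  exact sum_le_sum fun k _ => two_mul_card_filter_ne_le fun i => p i k

lemma two_mul_sum_sum_lt_le [LinearOrder ι] {D d : ι → ι → ℕ} (hd : ∀ i j, d i j = d j i)
    (hD : ∀ i j, i ≠ j → D i j ≤ d i j) :
    2 * ∑ i, ∑ j, (if i < j then D i j else 0) ≤ ∑ i, ∑ j, d i j := by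
  rw [two_mul]
  nth_rw 2 [sum_comm]
  rw [← sum_add_distrib]
  refine sum_le_sum fun i _ => ?_
  rw [← sum_add_distrib]
  refine sum_le_sum fun j _ => ?_
  rcases lt_trichotomy i j with h | rfl | h
  · simp [h, h.not_gt, hD i j h.ne]
  · simp
  · simp [h, h.not_gt, hd i j ▸ hD j i h.ne]

end

lemma div_mul_le_of_mul_le_mul {α : Type*} [Field α] [LinearOrder α] [IsStrictOrderedRing α]
    {a b c d : α} (hc : 0 ≤ c) (hd : 0 ≤ d) (h : a * b ≤ d * c) : a / c * b ≤ d := by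
  rcases hc.eq_or_lt with rfl | hc
  · simpa using hd
  · rwa [div_mul_eq_mul_div, div_le_iff₀ hc]

open Finset in
theorem stmt_6_general {M r : ℕ} (D : Fin M → Fin M → ℕ)
    (p : Fin M → (Fin r → ZMod 2))
    (hp : ∀ i j, i ≠ j → D i j ≤ hammingDist (p i) (p j)) :
    (if Even M then
        (4 : ℚ) / (M ^ 2) * ∑ i, ∑ j, if i < j then (D i j : ℚ) else 0
      else
        (4 : ℚ) / (M ^ 2 - 1) * ∑ i, ∑ j, if i < j then (D i j : ℚ) else 0) ≤ r := by
  have hplotkin :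
      4 * (∑ i, ∑ j, if i < j then D i j else 0) ≤
        r * if Even M then M ^ 2 else M ^ 2 - 1 := by
    have hS := two_mul_sum_sum_lt_le (fun i j => hammingDist_comm (p i) (p j)) hp
    have hdist := two_mul_sum_sum_hammingDist_le p
    simp only [Fintype.card_fin] at hdist
    linarith
  split_ifs at hplotkin ⊢ with hM
  · exact div_mul_le_of_mul_le_mul (by positivity) (by positivity) (by exact_mod_cast hplotkin)
  · have hM1 : 1 ≤ M ^ 2 := Nat.one_le_pow _ _ (Nat.not_even_iff_odd.mp hM).pos
    have hM1' : (1 : ℚ) ≤ M ^ 2 := by exact_mod_cast hM1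
    refine div_mul_le_of_mul_le_mul (sub_nonneg.mpr hM1') (by positivity) ?_
    have := (Nat.cast_le (α := ℚ)).mpr hplotkin
    push_cast [Nat.cast_sub hM1] at this
    exact this

open Finset in
/-- Generalized Plotkin bound for irregular-distance codes. -/
theorem stmt_6 {M r : ℕ} (D : Fin M → Fin M → ℕ)
    (hsymm : ∀ i j, D i j = D j i)
    (p : Fin M → (Fin r → ZMod 2))
    (hp : ∀ i j, i ≠ j → D i j ≤ hammingDist (p i) (p j)) :
    (if Even M then
        (4 : ℚ) / (M ^ 2) * ∑ i, ∑ j, if i < j then (D i j : ℚ) else 0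
      else
        (4 : ℚ) / (M ^ 2 - 1) * ∑ i, ∑ j, if i < j then (D i j : ℚ) else 0) ≤ r :=
  stmt_6_general D p hp
end

section
/- Let f : F_2^k → S with |Im(f)| ≥ 3, and suppose there exist u1, u2, u3 ∈ F_2^k with pairwise distinct function values such that d(u1,u2) = 1, d(u1,u3) = 1, and d(u2,u3) = 2. Then any (f,t)-FCC requires redundancy at least 3t; i.e., r_f(k,t) ≥ 3t. -/
lemma hd_sum {n : ℕ} (x y : Fin n → ZMod 2) :
    hammingDist x y = ∑ i, if x i = y i then 0 else 1 := by
  rw [hammingDist, Finset.card_filter]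
  apply Finset.sum_congr rfl
  intro i _
  by_cases h : x i = y i <;> simp [h]

lemma plotkin3 {n : ℕ} (a b c : Fin n → ZMod 2) :
    hammingDist a b + hammingDist a c + hammingDist b c ≤ 2 * n := by
  simp only [hd_sum]
  rw [← Finset.sum_add_distrib, ← Finset.sum_add_distrib]
  calc (∑ i, (((if a i = b i then 0 else 1) + if a i = c i then 0 else 1)
        + if b i = c i then 0 else 1))
      ≤ ∑ _i : Fin n, 2 := by
        apply Finset.sum_le_sum
        intro i _
        have : ∀ x y z : ZMod 2,
            ((if x = y then 0 else 1) + if x = z then 0 else 1)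
              + (if y = z then 0 else 1) ≤ 2 := by decide
        exact this _ _ _
    _ = 2 * n := by simp [Finset.sum_const, Nat.mul_comm]

/-- If |Im(f)| ≥ 3 and there are u₁,u₂,u₃ with pairwise distinct function values,
d(u₁,u₂)=1, d(u₁,u₃)=1, d(u₂,u₃)=2, then any systematic (f,t)-FCC has redundancy ≥ 3t. -/
theorem stmt_7 {k t : ℕ} (ht : 0 < t) {S : Type*}
    (f : (Fin k → ZMod 2) → S)
    (him : 3 ≤ (Set.range f).ncard)
    (u₁ u₂ u₃ : Fin k → ZMod 2)
    (hf12 : f u₁ ≠ f u₂) (hf13 : f u₁ ≠ f u₃) (hf23 : f u₂ ≠ f u₃)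
    (h12 : hammingDist u₁ u₂ = 1) (h13 : hammingDist u₁ u₃ = 1)
    (h23 : hammingDist u₂ u₃ = 2) :
    ∀ r : ℕ, ∀ Enc : (Fin k → ZMod 2) → (Fin (k + r) → ZMod 2),
      (∀ u i, Enc u (Fin.castAdd r i) = u i) →
      (∀ u v, f u ≠ f v → 2 * t + 1 ≤ hammingDist (Enc u) (Enc v)) →
      3 * t ≤ r := by
  intro r Enc hsys henc
  have split : ∀ u v : Fin k → ZMod 2,
      hammingDist (Enc u) (Enc v) = hammingDist u v +
        hammingDist (fun i => Enc u (Fin.natAdd k i)) (fun i => Enc v (Fin.natAdd k i)) := by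
    intro u v
    simp only [hd_sum]
    rw [Fin.sum_univ_add]
    congr 1
    apply Finset.sum_congr rfl
    intro i _
    rw [hsys u i, hsys v i]
  have d12 := henc u₁ u₂ hf12
  have d13 := henc u₁ u₃ hf13
  have d23 := henc u₂ u₃ hf23
  rw [split, h12] at d12
  rw [split, h13] at d13
  rw [split, h23] at d23
  have hp := plotkin3 (fun i => Enc u₁ (Fin.natAdd k i))
    (fun i => Enc u₂ (Fin.natAdd k i)) (fun i => Enc u₃ (Fin.natAdd k i))
  omega
end

section
/- Let f : F_2^k → S be a locally (2t,λ)-bounded function whose function balls B_f(u,2t) are contiguous blocks under a fixed total order on Im(f). Then r_f(k,t) ≤ N(λ,2t), where N(λ,2t) is the minimum length of a binary code with λ codewords and minimum distance 2t. -/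
private lemma hamming_eq_sum {n : ℕ} (x y : Fin n → ZMod 2) :
    hammingDist x y = ∑ i, if x i ≠ y i then 1 else 0 := by
  simp [hammingDist, Finset.card_filter]

private lemma hamming_append {k N : ℕ} (u v : Fin k → ZMod 2) (c d : Fin N → ZMod 2) :
    hammingDist (Fin.append u c) (Fin.append v d) = hammingDist u v + hammingDist c d := by
  rw [hamming_eq_sum, hamming_eq_sum, hamming_eq_sum, Fin.sum_univ_add]
  simp [Fin.append_left, Fin.append_right]

/-- For a locally (2t,λ)-bounded function with contiguous function balls, if there is a
binary code of length N with λ codewords and minimum distance 2t, then there exists an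
(f,t)-FCC with redundancy N; hence r_f(k,t) ≤ N(λ,2t). -/
theorem stmt_8 {k t lam N : ℕ} (ht : 0 < t) {S : Type*} [LinearOrder S]
    (f : (Fin k → ZMod 2) → S)
    (hcard : ∀ u, (funcBall f u (2 * t)).ncard ≤ lam)
    (hcontig : ∀ u, ∀ a ∈ funcBall f u (2 * t), ∀ b ∈ funcBall f u (2 * t),
      ∀ c ∈ Set.range f, a ≤ c → c ≤ b → c ∈ funcBall f u (2 * t))
    (C : Fin lam → (Fin N → ZMod 2))
    (hC : ∀ i j, i ≠ j → 2 * t ≤ hammingDist (C i) (C j)) :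
    ∃ Enc : (Fin k → ZMod 2) → (Fin (k + N) → ZMod 2),
      (∀ u i, Enc u (Fin.castAdd N i) = u i) ∧
      (∀ u v, f u ≠ f v → 2 * t + 1 ≤ hammingDist (Enc u) (Enc v)) := by
  classical
  -- balls are finite
  have hfin : ∀ u, (funcBall f u (2 * t)).Finite := fun u =>
    (Set.finite_range f).subset (fun s ⟨v, _, hv⟩ => ⟨v, hv⟩)
  have hself : ∀ u, f u ∈ funcBall f u (2 * t) := fun u => ⟨u, by simp, rfl⟩
  have hlam : 0 < lam := by
    have h1 : 0 < (funcBall f (fun _ => 0) (2 * t)).ncard :=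
      (Set.ncard_pos (hfin _)).mpr ⟨_, hself _⟩
    exact lt_of_lt_of_le h1 (hcard _)
  -- rank function
  set Ω : Finset S := (Set.finite_range f).toFinset with hΩ
  have hΩmem : ∀ s, s ∈ Ω ↔ s ∈ Set.range f := fun s => Set.Finite.mem_toFinset _
  set rk : S → ℕ := fun s => (Ω.filter (fun c => c < s)).card with hrk
  -- key: if d(u,v) ≤ 2t and f u < f v then ranks differ mod lam
  have key : ∀ u v, hammingDist u v ≤ 2 * t → f u < f v →
      rk (f u) % lam ≠ rk (f v) % lam := by
    intro u v hd hlt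
    set M : Finset S := Ω.filter (fun c => f u ≤ c ∧ c < f v) with hM
    have hfv : f v ∈ funcBall f u (2 * t) := ⟨v, hd, rfl⟩
    -- rk (f v) = rk (f u) + M.card
    have hsplit : rk (f v) = rk (f u) + M.card := by
      have hun : Ω.filter (fun c => c < f v) =
          Ω.filter (fun c => c < f u) ∪ M := by
        ext c
        simp only [Finset.mem_filter, Finset.mem_union, hM]
        constructor
        · rintro ⟨hc, hcv⟩
          rcases lt_or_ge c (f u) with h | h
          · exact Or.inl ⟨hc, h⟩
          · exact Or.inr ⟨hc, h, hcv⟩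
        · rintro (⟨hc, hcu⟩ | ⟨hc, _, hcv⟩)
          · exact ⟨hc, lt_trans hcu hlt⟩
          · exact ⟨hc, hcv⟩
      have hdisj : Disjoint (Ω.filter (fun c => c < f u)) M := by
        rw [Finset.disjoint_left]
        intro c hc hcM
        simp only [Finset.mem_filter, hM] at hc hcM
        exact absurd hcM.2.1 (not_le.mpr hc.2)
      rw [hrk]
      simp only
      rw [hun, Finset.card_union_of_disjoint hdisj]
    -- bounds on M.card
    have hMpos : 0 < M.card := by
      refine Finset.card_pos.mpr ⟨f u, ?_⟩
      simp only [hM, Finset.mem_filter, hΩmem]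
      exact ⟨⟨u, rfl⟩, le_refl _, hlt⟩
    have hMlt : M.card < lam := by
      have hsub : insert (f v) M ⊆ (hfin u).toFinset := by
        intro c hc
        rw [Set.Finite.mem_toFinset]
        rcases Finset.mem_insert.mp hc with h | h
        · exact h ▸ hfv
        · simp only [hM, Finset.mem_filter, hΩmem] at h
          exact hcontig u (f u) (hself u) (f v) hfv c h.1 h.2.1 (le_of_lt h.2.2)
      have hfvM : f v ∉ M := by
        simp only [hM, Finset.mem_filter]
        rintro ⟨-, -, h⟩
        exact lt_irrefl _ h
      have h1 : M.card + 1 ≤ (hfin u).toFinset.card := by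
        rw [← Finset.card_insert_of_notMem hfvM]
        exact Finset.card_le_card hsub
      have h2 : (funcBall f u (2 * t)).ncard = (hfin u).toFinset.card :=
        Set.ncard_eq_toFinset_card _ (hfin u)
      have h3 := hcard u
      omega
    intro hmod
    have hme : rk (f u) ≡ rk (f u) + M.card [MOD lam] := by
      rw [Nat.ModEq, hmod, hsplit]
    have hdvd : lam ∣ M.card := by
      have := (Nat.modEq_iff_dvd' (Nat.le_add_right _ _)).mp hme
      simpa using this
    exact absurd (Nat.le_of_dvd hMpos hdvd) (not_le.mpr hMlt)
  -- the encoding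
  set lab : (Fin k → ZMod 2) → Fin lam :=
    fun u => ⟨rk (f u) % lam, Nat.mod_lt _ hlam⟩ with hlab
  refine ⟨fun u => Fin.append u (C (lab u)), fun u i => Fin.append_left _ _ _, ?_⟩
  intro u v hne
  rw [hamming_append]
  have huv : u ≠ v := fun h => hne (h ▸ rfl)
  have hd1 : 1 ≤ hammingDist u v := hammingDist_pos.mpr huv
  rcases le_or_gt (hammingDist u v) (2 * t) with hd | hd
  · have hlabne : lab u ≠ lab v := by
      rcases lt_trichotomy (f u) (f v) with h | h | h
      · intro heq
        exact key u v hd h (by simpa [hlab, Fin.ext_iff] using heq)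
      · exact absurd h hne
      · intro heq
        exact key v u (by rwa [hammingDist_comm]) h
          (by simpa [hlab, Fin.ext_iff] using heq.symm)
    have := hC _ _ hlabne
    omega
  · omega
end

section
/- Let t, T be positive integers with 2t < T ≤ 4t, and define Δ_T(u) = ⌊wt(u)/T⌋. The encoding Enc(u) = (u, (Δ_T(u) mod 2)^{2t}) (appending 2t copies of the parity bit of Δ_T(u)) is a (Δ_T, t)-FCC: for all u, v ∈ F_2^k with Δ_T(u) ≠ Δ_T(v), d(Enc(u), Enc(v)) ≥ 2t+1. -/
lemma hammingDist_append_aux {α : Type*} [DecidableEq α] {m n : ℕ}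
    (u v : Fin m → α) (a b : Fin n → α) :
    hammingDist (Fin.append u a) (Fin.append v b) = hammingDist u v + hammingDist a b := by
  simp only [hammingDist, Finset.card_filter]
  rw [Fin.sum_univ_add]
  simp [Fin.append_left, Fin.append_right]

lemma hammingDist_norm_sub {m : ℕ} (u v : Fin m → ZMod 2) :
    hammingNorm v ≤ hammingDist u v + hammingNorm u := by
  have h1 : hammingNorm v = hammingDist v 0 := (hammingDist_zero_right v).symm
  have h2 : hammingNorm u = hammingDist u 0 := (hammingDist_zero_right u).symm
  calc hammingNorm v = hammingDist v 0 := h1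
    _ ≤ hammingDist v u + hammingDist u 0 := hammingDist_triangle v u 0
    _ = hammingDist u v + hammingNorm u := by rw [hammingDist_comm, h2]

/-- For 2t < T ≤ 4t, appending 2t copies of the parity bit of Δ_T(u) = ⌊wt(u)/T⌋
gives a (Δ_T, t)-FCC. -/
theorem stmt_13 {k t T : ℕ} (ht : 0 < t) (hlo : 2 * t < T) (hhi : T ≤ 4 * t) :
    ∀ u v : Fin k → ZMod 2, hammingNorm u / T ≠ hammingNorm v / T →
      2 * t + 1 ≤ hammingDist
        (Fin.append u (fun _ : Fin (2 * t) => ((hammingNorm u / T : ℕ) : ZMod 2)))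
        (Fin.append v (fun _ : Fin (2 * t) => ((hammingNorm v / T : ℕ) : ZMod 2))) := by
  intro u v hne
  set a := hammingNorm u / T with ha
  set b := hammingNorm v / T with hb
  rw [hammingDist_append_aux]
  by_cases hpar : (a : ZMod 2) = (b : ZMod 2)
  · -- same parity: |a - b| ≥ 2, so weights differ by more than T ≥ 2t+1
    have hmod : a % 2 = b % 2 := by
      have := (ZMod.natCast_eq_natCast_iff a b 2).mp hpar
      simpa [Nat.ModEq] using this
    have hT : 0 < T := by omega
    have key : 2 * t + 1 ≤ hammingDist u v := by
      have hdu : T * a + hammingNorm u % T = hammingNorm u := by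
        rw [ha]; exact Nat.div_add_mod _ _
      have hdv : T * b + hammingNorm v % T = hammingNorm v := by
        rw [hb]; exact Nat.div_add_mod _ _
      have hru : hammingNorm u % T < T := Nat.mod_lt _ hT
      have hrv : hammingNorm v % T < T := Nat.mod_lt _ hT
      have huv : hammingNorm v ≤ hammingDist u v + hammingNorm u := hammingDist_norm_sub u v
      have hvu : hammingNorm u ≤ hammingDist u v + hammingNorm v := by
        rw [hammingDist_comm]; exact hammingDist_norm_sub v u
      rcases Nat.lt_or_ge a b with h | h
      · have h2 : a + 2 ≤ b := by omega
        have hm : T * (a + 2) ≤ T * b := Nat.mul_le_mul_left T h2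
        have he : T * (a + 2) = T * a + 2 * T := by ring
        omega
      · have h2 : b + 2 ≤ a := by omega
        have hm : T * (b + 2) ≤ T * a := Nat.mul_le_mul_left T h2
        have he : T * (b + 2) = T * b + 2 * T := by ring
        omega
    have : (0:ℕ) ≤ hammingDist (fun _ : Fin (2*t) => ((a:ℕ) : ZMod 2))
        (fun _ : Fin (2*t) => ((b:ℕ) : ZMod 2)) := Nat.zero_le _
    omega
  · -- different parity: tail contributes 2t, head at least 1
    have htail : hammingDist (fun _ : Fin (2*t) => ((a:ℕ) : ZMod 2))
        (fun _ : Fin (2*t) => ((b:ℕ) : ZMod 2)) = 2 * t := by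
      simp [hammingDist, hpar]
    have hhead : 1 ≤ hammingDist u v := by
      rcases Nat.eq_zero_or_pos (hammingDist u v) with h0 | h0
      · exact absurd (congrArg (fun w => hammingNorm w / T) (hammingDist_eq_zero.mp h0)) hne
      · exact h0
    omega
end

section
/- Let t, T, m be positive integers with 2 ≤ m ≤ 4t and 4t/m < T ≤ 4t/(m−1), and set a = ⌈m/2⌉ + 1. If C_0,...,C_{a−1} ∈ F_2^N are codewords with pairwise Hamming distance at least 2t, then Enc(u) = (u, C_{Δ_T(u) mod a}) is a (Δ_T, t)-FCC. Consequently r_{Δ_T}(k,t) ≤ N(⌈m/2⌉+1, 2t). -/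
lemma append_hammingDist {α : Type*} [DecidableEq α] {k N : ℕ}
    (u v : Fin k → α) (x y : Fin N → α) :
    hammingDist (Fin.append u x) (Fin.append v y) =
      hammingDist u v + hammingDist x y := by
  simp only [hammingDist, Finset.card_filter]
  rw [Fin.sum_univ_add]
  simp [Fin.append_left, Fin.append_right]

lemma wt_gap {t T a : ℕ} (hT : 0 < T) (h2t : 2 * t < (a - 1) * T) (ha : 1 ≤ a)
    {wu wv : ℕ} (hda : wu / T + a ≤ wv / T) : wu + (2 * t + 1) ≤ wv := by
  have h1 : T * (wu / T + a) ≤ T * (wv / T) := Nat.mul_le_mul_left T hda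
  have h2 : T * (wv / T) ≤ wv := Nat.mul_div_le wv T
  have h3 : wu < T * (wu / T + 1) := by
    rw [Nat.mul_add, Nat.mul_one]
    exact Nat.lt_mul_div_succ wu hT |>.trans_eq (by ring)
  have h4 : (a - 1) * T + T = a * T := by
    rw [← Nat.succ_pred_eq_of_pos ha, Nat.succ_mul]; simp
  nlinarith [Nat.mul_div_le wu T]

lemma mod_gap {a x y : ℕ} (h : x < y) (hm : x % a = y % a) : x + a ≤ y := by
  have hdvd : a ∣ y - x := (Nat.modEq_iff_dvd' h.le).mp hm
  rcases hdvd with ⟨c, hc⟩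
  rcases Nat.eq_zero_or_pos c with rfl | hc0
  · omega
  · have : a ≤ a * c := Nat.le_mul_of_pos_right a hc0
    omega

/-- For 2 ≤ m ≤ 4t and 4t/m < T ≤ 4t/(m−1), with a = ⌈m/2⌉+1 and codewords
C_0,…,C_{a−1} of length N with pairwise distance ≥ 2t, the encoding
Enc(u) = (u, C_{Δ_T(u) mod a}) is a (Δ_T,t)-FCC; hence r_{Δ_T}(k,t) ≤ N(⌈m/2⌉+1, 2t). -/
theorem stmt_14 {k t T m N : ℕ} (ht : 0 < t) (hT : 0 < T)
    (hm2 : 2 ≤ m) (hm4t : m ≤ 4 * t)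
    (hlo : (4 * t : ℚ) / m < T) (hhi : (T : ℚ) ≤ 4 * t / (m - 1))
    (a : ℕ) (ha : a = (m + 1) / 2 + 1)
    (C : ℕ → (Fin N → ZMod 2))
    (hC : ∀ i j, i < a → j < a → i ≠ j → 2 * t ≤ hammingDist (C i) (C j)) :
    ∀ u v : Fin k → ZMod 2, hammingNorm u / T ≠ hammingNorm v / T →
      2 * t + 1 ≤ hammingDist
        (Fin.append u (C (hammingNorm u / T % a)))
        (Fin.append v (C (hammingNorm v / T % a))) := by
  have ha0 : 0 < a := by omega
  -- 4t < m*T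
  have h4t : 4 * t < m * T := by
    have hmQ : (0 : ℚ) < m := by exact_mod_cast (by omega : 0 < m)
    have := (div_lt_iff₀ hmQ).mp hlo
    have : (4 * t : ℚ) < (m * T : ℕ) := by push_cast; linarith
    exact_mod_cast this
  have h2t : 2 * t < (a - 1) * T := by
    have hm' : m ≤ 2 * (a - 1) := by omega
    have h5 : m * T ≤ (2 * (a - 1)) * T := Nat.mul_le_mul_right T hm'
    have h6 : (2 * (a - 1)) * T = 2 * ((a - 1) * T) := by ring
    omega
  intro u v hne
  set du := hammingNorm u / T with hdu
  set dv := hammingNorm v / T with hdv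
  rw [append_hammingDist]
  by_cases hij : du % a = dv % a
  · -- same index: distance between u and v must be large
    have key : ∀ w1 w2 : Fin k → ZMod 2,
        hammingNorm w1 / T + a ≤ hammingNorm w2 / T →
        2 * t + 1 ≤ hammingDist w1 w2 := by
      intro w1 w2 hgap
      have hg := wt_gap hT h2t (by omega) hgap
      have htri : hammingNorm w2 ≤ hammingDist w2 w1 + hammingNorm w1 := by
        calc hammingNorm w2 = hammingDist w2 0 := (hammingDist_zero_right w2).symm
          _ ≤ hammingDist w2 w1 + hammingDist w1 0 := hammingDist_triangle w2 w1 0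
          _ = hammingDist w2 w1 + hammingNorm w1 := by rw [hammingDist_zero_right]
      rw [hammingDist_comm] at htri
      omega
    rcases lt_or_gt_of_ne hne with h | h
    · have := key u v (mod_gap h hij)
      omega
    · have := key v u (mod_gap h hij.symm)
      rw [hammingDist_comm] at this
      omega
  · -- different indices
    have hCd : 2 * t ≤ hammingDist (C (du % a)) (C (dv % a)) :=
      hC _ _ (Nat.mod_lt _ ha0) (Nat.mod_lt _ ha0) hij
    have huv : u ≠ v := by
      intro h; apply hne; rw [hdu, hdv, h]
    have h1 : 1 ≤ hammingDist u v := by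
      rw [Nat.one_le_iff_ne_zero]
      simpa [hammingDist_eq_zero] using huv
    omega
end
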